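/- The polynomial invariant P is complete for rooted forests: two rooted forests F_1 and F_2 satisfy P_{F_1} = P_{F_2} if and only if F_1 and F_2 are isomorphic as rooted forests. -/

import Mathlib

open MvPolynomial

/-- A rooted tree: a root node together with a list of branches. -/
inductive RTree : Type
  | node : List RTree → RTree

/-- A rooted forest: a finite (possibly empty) list of rooted trees. -/
abbrev RForest : Type := List RTree

namespace RTree

/-- Number of vertices of a rooted tree. -/
def size : RTree → ℕ
  | .node ts => 1 + (ts.attach.map fun s => size s.1).sum

  decreasing_by
    all_goals
      simp only [RTree.node.sizeOf_spec]
      have := List.sizeOf_lt_of_mem s.2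
      omega

/-- Number of leaves of a rooted tree. -/
def leafCount : RTree → ℕ
  | .node [] => 1
  | .node (t :: ts) => ((t :: ts).attach.map fun s => leafCount s.1).sum

  decreasing_by
    all_goals
      simp only [RTree.node.sizeOf_spec]
      have := List.sizeOf_lt_of_mem s.2
      omega

/-- The bivariate generating polynomial `P_T(x,y)` of leaf-induced subtrees of `T`,
counted by number of vertices (`X 0`) and number of leaves (`X 1`). -/
noncomputable def Ptree : RTree → MvPolynomial (Fin 2) ℤ
  | .node [] => 1 + X 0 * X 1
  | .node (t :: ts) =>
      1 - X 0 + X 0 * ((t :: ts).attach.map fun s => Ptree s.1).prod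

  decreasing_by
    all_goals
      simp only [RTree.node.sizeOf_spec]
      have := List.sizeOf_lt_of_mem s.2
      omega

/-- The polynomial `p_T(x) = 1 - P_T(x,-1)`. -/
noncomputable def pPol (T : RTree) : Polynomial ℤ :=
  1 - MvPolynomial.aeval ![Polynomial.X, -1] (Ptree T)

/-- The bivariate generating polynomial `S_T(x,y)` of subtrees of `T` (empty or connected
containing the root), counted by vertices (`X 0`) and boundary vertices (`X 1`). -/
noncomputable def Stree : RTree → MvPolynomial (Fin 2) ℤ
  | .node ts => X 1 + X 0 * (ts.attach.map fun s => Stree s.1).prod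

  decreasing_by
    all_goals
      simp only [RTree.node.sizeOf_spec]
      have := List.sizeOf_lt_of_mem s.2
      omega

/-- The bivariate generating polynomial `A_T(x,y)` of admissible subtrees of `T`,
counted by vertices (`X 0`) and boundary vertices (`X 1`). -/
noncomputable def Atree : RTree → MvPolynomial (Fin 2) ℤ
  | .node [] => X 1
  | .node (t :: ts) =>
      X 1 + X 0 * ((t :: ts).attach.map fun s => Atree s.1).prod

  decreasing_by
    all_goals
      simp only [RTree.node.sizeOf_spec]
      have := List.sizeOf_lt_of_mem s.2
      omega

/-- The trivariate polynomial `M_T(x,y,z)` (with `x = X 0`, `y = X 1`, `z = X 2`). -/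
noncomputable def Mtree : RTree → MvPolynomial (Fin 3) ℤ
  | .node ts =>
      Polynomial.aeval (X 2) (pPol (.node ts)).divX +
        X 0 * ∑ i : Fin ts.length,
          Mtree (ts.get i) *
            ∏ j ∈ Finset.univ.erase i,
              MvPolynomial.rename Fin.castSucc (Atree (ts.get j))
  decreasing_by
    simp only [RTree.node.sizeOf_spec]
    have h : sizeOf (ts.get i) < sizeOf ts := List.sizeOf_lt_of_mem (by first | exact List.get_mem ts i | simp)
    omega

/-- Number of vertices in the stem of a rooted tree. -/
def stemCount : RTree → ℕ
  | .node [t] => 1 + stemCount t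
  | .node _ => 1

/-- Isomorphism of rooted trees. -/
def Iso : RTree → RTree → Prop
  | .node ts, .node us =>
      ∃ σ : Fin ts.length ≃ Fin us.length,
        ∀ i : Fin ts.length, Iso (ts.get i) (us.get (σ i))
  decreasing_by
    simp only [RTree.node.sizeOf_spec]
    have h : sizeOf (ts.get i) < sizeOf ts := List.sizeOf_lt_of_mem (by first | exact List.get_mem ts i | simp)
    omega

end RTree

namespace RForest

open RTree

/-- Number of vertices of a rooted forest. -/
def size (F : RForest) : ℕ := (F.map RTree.size).sum

/-- Number of leaves of a rooted forest. -/
def leafCount (F : RForest) : ℕ := (F.map RTree.leafCount).sum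

/-- The polynomial `P_F` of a rooted forest: product over components. -/
noncomputable def Pforest (F : RForest) : MvPolynomial (Fin 2) ℤ := (F.map Ptree).prod

/-- The polynomial `S_F` of a rooted forest: product over components. -/
noncomputable def Sforest (F : RForest) : MvPolynomial (Fin 2) ℤ := (F.map Stree).prod

/-- Number of vertices in the stem of a rooted forest (`0` unless the forest is a tree). -/
def stemCount : RForest → ℕ
  | [T] => RTree.stemCount T
  | _ => 0

/-- Isomorphism of rooted forests: a matching of the components by isomorphisms. -/
def Iso (F G : RForest) : Prop :=
  ∃ σ : Fin F.length ≃ Fin G.length,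
    ∀ i : Fin F.length, RTree.Iso (F.get i) (G.get (σ i))

end RForest


/-!
Substituting `y = Y - 1` turns `P_T` into a polynomial in `Y` over `ℤ[x]` of degree `L(T)` with
leading coefficient `x ^ |T|`. Its lower coefficients vanish at `x = 1`, since
`P_T(1, y) = (1 + y) ^ L(T)`, and its constant coefficient `1 - p_T(x)` has only a simple root at
`x = 1`, since `p_T'(1)` is the number of stem vertices. So `P_T` is irreducible by Eisenstein's
criterion at `x - 1`. All `P_T` have constant term `1`, so unique factorisation in `ℤ[x, y]`
recovers the multiset of the `P_T` from `P_F = ∏ P_T`, and `P_T = 1 - x + x P_{branches of T}`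
lets one recurse into the branches.
-/

open scoped Polynomial

lemma List.prod_map_pow_eq_pow_sum {M α : Type*} [Monoid M] (l : List α) (f : α → ℕ)
    (a : M) :
    (l.map fun i => a ^ f i).prod = a ^ (l.map f).sum := by
  induction l with
  | nil => simp
  | cons i l ih => simp [pow_add, ih]

lemma List.Perm.exists_equiv_get_eq {α : Type*} {l₁ l₂ : List α} (h : l₁.Perm l₂) :
    ∃ σ : Fin l₁.length ≃ Fin l₂.length, ∀ i, l₂.get (σ i) = l₁.get i := by
  induction h with
  | nil => exact ⟨Equiv.refl _, fun i => i.elim0⟩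
  | @cons x l₁ l₂ _ ih =>
    obtain ⟨σ, hσ⟩ := ih
    refine ⟨(finSuccEquiv l₁.length).trans
      ((Equiv.optionCongr σ).trans (finSuccEquiv l₂.length).symm), fun i => ?_⟩
    exact Fin.cases rfl (fun j => hσ j) i
  | swap x y l =>
    refine ⟨Equiv.swap ⟨0, by simp⟩ ⟨1, by simp⟩, fun ⟨n, hn⟩ => ?_⟩
    match n, hn with
    | 0, _ => rfl
    | 1, _ => rfl
    | _ + 2, _ => rfl
  | trans _ _ ih₁ ih₂ =>
    obtain ⟨σ₁, hσ₁⟩ := ih₁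
    obtain ⟨σ₂, hσ₂⟩ := ih₂
    exact ⟨σ₁.trans σ₂, fun i => by rw [Equiv.trans_apply, hσ₂, hσ₁]⟩

lemma List.prod_map_eq_of_equiv {α M : Type*} [CommMonoid M] {l₁ l₂ : List α} {f : α → M}
    (σ : Fin l₁.length ≃ Fin l₂.length) (h : ∀ i, f (l₁.get i) = f (l₂.get (σ i))) :
    (l₁.map f).prod = (l₂.map f).prod := by
  rw [← Fin.prod_univ_fun_getElem, ← Fin.prod_univ_fun_getElem, ← σ.prod_comp]
  exact Finset.prod_congr rfl fun i _ => h i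

lemma MvPolynomial.eq_of_associated_of_constantCoeff_eq_one {σ R : Type*} [CommRing R]
    [IsReduced R] {p q : MvPolynomial σ R} (h : Associated p q) (hp : constantCoeff p = 1)
    (hq : constantCoeff q = 1) : p = q := by
  obtain ⟨u, rfl⟩ := h
  obtain ⟨r, -, hr⟩ := isUnit_iff_eq_C_of_isReduced.mp u.isUnit
  rw [map_mul, hp, one_mul, hr, constantCoeff_C] at hq
  rw [hr, hq, map_one, mul_one]

namespace RTree

open Polynomial (derivative natDegree leadingCoeff)

@[elab_as_elim]
theorem induction {motive : RTree → Prop}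
    (node : ∀ ts : List RTree, (∀ t ∈ ts, motive t) → motive (.node ts)) : ∀ t, motive t
  | .node ts => node ts fun t _ => induction node t

lemma iso_node_iff (ts us : List RTree) : Iso (.node ts) (.node us) ↔ RForest.Iso ts us := by
  rw [Iso, RForest.Iso]

lemma size_node (ts : List RTree) : size (.node ts) = 1 + (ts.map size).sum := by
  rw [size, List.attach_map_val]

lemma leafCount_nil : leafCount (.node []) = 1 := by
  rw [leafCount]

lemma leafCount_cons (t : RTree) (ts : List RTree) :
    leafCount (.node (t :: ts)) = ((t :: ts).map leafCount).sum := by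
  rw [leafCount, List.attach_map_val]

lemma leafCount_pos (T : RTree) : 0 < leafCount T := by
  induction T using RTree.induction with
  | node ts ih =>
    cases ts with
    | nil => simp [leafCount_nil]
    | cons t ts => simpa [leafCount_cons] using Or.inl (ih t (by simp))

lemma stemCount_pos (T : RTree) : 0 < stemCount T := by
  rcases T with ⟨_ | ⟨t, _ | _⟩⟩ <;> simp [stemCount]

lemma Ptree_nil : Ptree (.node []) = 1 + X 0 * X 1 := by
  rw [Ptree]

lemma Ptree_cons (t : RTree) (ts : List RTree) :
    Ptree (.node (t :: ts)) = 1 - X 0 + X 0 * RForest.Pforest (t :: ts) := by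
  rw [Ptree, List.attach_map_val, RForest.Pforest]

lemma constantCoeff_Ptree (T : RTree) : constantCoeff (Ptree T) = 1 := by
  rcases T with ⟨_ | ⟨t, ts⟩⟩ <;> simp [Ptree_nil, Ptree_cons]

lemma Ptree_ne_zero (T : RTree) : Ptree T ≠ 0 := fun h => by
  simpa [h] using constantCoeff_Ptree T

lemma eval_Ptree_zero_left (b : ℤ) (T : RTree) : eval ![0, b] (Ptree T) = 1 := by
  rcases T with ⟨_ | ⟨t, ts⟩⟩ <;> simp [Ptree_nil, Ptree_cons]

lemma aeval_Ptree_one_left {R : Type*} [CommRing R] [Algebra ℤ R] (b : R) (T : RTree) :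
    aeval ![1, b] (Ptree T) = (1 + b) ^ leafCount T := by
  induction T using RTree.induction with
  | node ts ih =>
    cases ts with
    | nil => simp [Ptree_nil, leafCount_nil]
    | cons t ts =>
      rw [Ptree_cons, leafCount_cons, RForest.Pforest, ← List.prod_map_pow_eq_pow_sum]
      simp only [map_add, map_sub, map_mul, map_one, aeval_X, map_list_prod, List.map_map]
      rw [List.map_congr_left (f := aeval ![1, b] ∘ Ptree)
        (g := fun s => (1 + b) ^ leafCount s) ih]
      simp

lemma Ptree_nil_ne_Ptree_cons (u : RTree) (us : List RTree) :
    Ptree (.node []) ≠ Ptree (.node (u :: us)) := by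
  intro h
  rw [Ptree_nil, Ptree_cons] at h
  have h' : 1 + X 1 = RForest.Pforest (u :: us) :=
    mul_left_cancel₀ (X_ne_zero 0) (by linear_combination h)
  have := congrArg (eval ![0, 1]) h'
  norm_num [RForest.Pforest, map_list_prod, Function.comp_def, eval_Ptree_zero_left] at this

lemma pPol_nil : pPol (.node []) = Polynomial.X := by
  simp [pPol, Ptree_nil]

lemma pPol_cons (t : RTree) (ts : List RTree) :
    pPol (.node (t :: ts)) =
      Polynomial.X - Polynomial.X * ((t :: ts).map fun s => 1 - pPol s).prod := by
  simp only [pPol, Ptree_cons, RForest.Pforest, map_add, map_sub, map_mul, map_one, aeval_X,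
    map_list_prod, List.map_map, Function.comp_def, Matrix.cons_val_zero, sub_sub_cancel]
  ring

lemma pPol_eval_zero (T : RTree) : (pPol T).eval 0 = 0 := by
  rcases T with ⟨_ | ⟨t, ts⟩⟩ <;> simp [pPol_nil, pPol_cons]

lemma pPol_eval_one (T : RTree) : (pPol T).eval 1 = 1 := by
  induction T using RTree.induction with
  | node ts ih =>
    cases ts with
    | nil => simp [pPol_nil]
    | cons t ts => simp [pPol_cons, Polynomial.eval_list_prod, ih t (by simp)]

lemma pPol_derivative_eval_one (T : RTree) : (derivative (pPol T)).eval 1 = stemCount T := by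
  induction T using RTree.induction with
  | node ts ih =>
    match ts with
    | [] => simp [pPol_nil, stemCount]
    | [t] => simp [pPol_cons, stemCount, pPol_eval_one, ih t (by simp)]
    | t :: u :: ts => simp [pPol_cons, stemCount, Polynomial.derivative_mul, pPol_eval_one]

lemma not_sq_dvd_one_sub_pPol (T : RTree) : ¬ (Polynomial.X - 1) ^ 2 ∣ 1 - pPol T := by
  rintro ⟨q, hq⟩
  have h := congrArg (fun p => (derivative p).eval 1) hq
  simp [Polynomial.derivative_mul, Polynomial.derivative_pow, pPol_derivative_eval_one] at h
  exact (stemCount_pos T).ne' h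

/-- `x ↦ x`, `y ↦ Y - 1`: after this shift `P_T` is Eisenstein at `x - 1` as a polynomial
in `Y`. -/
noncomputable def shiftEquiv : MvPolynomial (Fin 2) ℤ ≃ₐ[ℤ] ℤ[X][X] :=
  AlgEquiv.ofAlgHom (aeval ![Polynomial.C Polynomial.X, Polynomial.X - 1])
    (Polynomial.aevalTower (Polynomial.aeval (X 0)) (X 1 + 1))
    (Polynomial.algHom_ext' (Polynomial.algHom_ext (by simp)) (by simp))
    (MvPolynomial.algHom_ext fun i => by fin_cases i <;> simp)

lemma shiftEquiv_apply (p : MvPolynomial (Fin 2) ℤ) :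
    shiftEquiv p = aeval (![Polynomial.C Polynomial.X, Polynomial.X - 1] : Fin 2 → ℤ[X][X]) p :=
  rfl

@[simp]
lemma shiftEquiv_X_zero : shiftEquiv (X 0) = Polynomial.C Polynomial.X := by
  simp [shiftEquiv_apply]

@[simp]
lemma shiftEquiv_X_one : shiftEquiv (X 1) = Polynomial.X - 1 := by
  simp [shiftEquiv_apply]

lemma natDegree_leadingCoeff_shiftEquiv_Ptree (T : RTree) :
    natDegree (shiftEquiv (Ptree T)) = leafCount T ∧
      leadingCoeff (shiftEquiv (Ptree T)) = Polynomial.X ^ size T := by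
  induction T using RTree.induction with
  | node ts ih =>
    cases ts with
    | nil =>
      have h : shiftEquiv (Ptree (.node [])) =
          Polynomial.C Polynomial.X * Polynomial.X + Polynomial.C (1 - Polynomial.X) := by
        simp [Ptree_nil]; ring
      rw [h, Polynomial.natDegree_linear Polynomial.X_ne_zero,
        Polynomial.leadingCoeff_linear Polynomial.X_ne_zero, leafCount_nil, size_node]
      simp
    | cons t ts =>
      set l := (t :: ts).map fun s => shiftEquiv (Ptree s)
      have h : shiftEquiv (Ptree (.node (t :: ts))) =
          Polynomial.C (1 - Polynomial.X) + Polynomial.C Polynomial.X * l.prod := by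
        simp only [l, Ptree_cons, RForest.Pforest, map_add, map_sub, map_one, map_mul,
          map_list_prod, List.map_map, Function.comp_def, shiftEquiv_X_zero]
      have hlead : leadingCoeff l.prod = Polynomial.X ^ ((t :: ts).map size).sum := by
        rw [← Polynomial.leadingCoeffHom_apply, map_list_prod, List.map_map,
          ← List.prod_map_pow_eq_pow_sum]
        exact congrArg List.prod (List.map_congr_left fun s hs => (ih s hs).2)
      have hdeg : natDegree l.prod = ((t :: ts).map leafCount).sum := by
        rw [← Multiset.prod_coe, Polynomial.natDegree_multiset_prod]
        · simp only [l, Multiset.map_coe, Multiset.sum_coe, List.map_map]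
          exact congrArg List.sum (List.map_congr_left fun s hs => (ih s hs).1)
        · simp only [l, Multiset.mem_coe, List.mem_map, not_exists, not_and]
          exact fun s _ h0 => Ptree_ne_zero s (by simpa using h0)
      have hdeg' : natDegree (Polynomial.C Polynomial.X * l.prod) = natDegree l.prod :=
        Polynomial.natDegree_C_mul Polynomial.X_ne_zero
      have hlt : (Polynomial.C (1 - Polynomial.X : ℤ[X])).degree
          < (Polynomial.C Polynomial.X * l.prod).degree := by
        refine Polynomial.degree_C_le.trans_lt (Polynomial.natDegree_pos_iff_degree_pos.mp ?_)
        rw [hdeg', hdeg, List.map_cons, List.sum_cons]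
        have := leafCount_pos t
        omega
      rw [h, Polynomial.natDegree_add_eq_right_of_degree_lt hlt, hdeg', hdeg,
        Polynomial.leadingCoeff_add_of_degree_lt hlt, Polynomial.leadingCoeff_mul, hlead,
        leafCount_cons, size_node]
      simp [pow_add]

lemma map_eval_one_shiftEquiv_Ptree (T : RTree) :
    (shiftEquiv (Ptree T)).map (Polynomial.evalRingHom 1) = Polynomial.X ^ leafCount T := by
  have h : (Polynomial.mapRingHom (Polynomial.evalRingHom 1)).comp shiftEquiv.toRingHom =
      (aeval ![1, Polynomial.X - 1] : MvPolynomial (Fin 2) ℤ →ₐ[ℤ] ℤ[X]).toRingHom :=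
    MvPolynomial.ringHom_ext (fun r => by simp) fun i => by fin_cases i <;> simp
  calc _ = aeval ![1, Polynomial.X - 1] (Ptree T) := RingHom.congr_fun h (Ptree T)
    _ = _ := by rw [aeval_Ptree_one_left, add_sub_cancel]

lemma coeff_zero_shiftEquiv_Ptree (T : RTree) :
    (shiftEquiv (Ptree T)).coeff 0 = 1 - pPol T := by
  have h : Polynomial.constantCoeff.comp shiftEquiv.toRingHom =
      (aeval ![Polynomial.X, -1] : MvPolynomial (Fin 2) ℤ →ₐ[ℤ] ℤ[X]).toRingHom :=
    MvPolynomial.ringHom_ext (fun r => by simp) fun i => by fin_cases i <;> simp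
  simpa [pPol] using RingHom.congr_fun h (Ptree T)

lemma isPrimitive_shiftEquiv_Ptree (T : RTree) : (shiftEquiv (Ptree T)).IsPrimitive := by
  intro r hr
  rw [Polynomial.C_dvd_iff_dvd_coeff] at hr
  have hlead : r ∣ Polynomial.X ^ size T := by
    have := hr (leafCount T)
    rwa [← (natDegree_leadingCoeff_shiftEquiv_Ptree T).1, ← Polynomial.leadingCoeff,
      (natDegree_leadingCoeff_shiftEquiv_Ptree T).2] at this
  obtain ⟨i, -, u, hu⟩ := (dvd_prime_pow Polynomial.prime_X _).mp hlead
  rcases Nat.eq_zero_or_pos i with rfl | hi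
  · exact IsUnit.of_mul_eq_one (u : ℤ[X]) (by simpa using hu)
  · have hX : Polynomial.X ∣ 1 - pPol T :=
      (Units.dvd_mul_right.mp (hu ▸ dvd_pow_self _ hi.ne')).trans
        (coeff_zero_shiftEquiv_Ptree T ▸ hr 0)
    simp [Polynomial.X_dvd_iff, Polynomial.coeff_zero_eq_eval_zero, pPol_eval_zero] at hX

theorem irreducible_Ptree (T : RTree) : Irreducible (Ptree T) := by
  rw [← MulEquiv.irreducible_iff shiftEquiv]
  obtain ⟨hdeg, hlead⟩ := natDegree_leadingCoeff_shiftEquiv_Ptree T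
  have hdegree : (shiftEquiv (Ptree T)).degree = leafCount T := by
    rw [Polynomial.degree_eq_natDegree (by simpa using Ptree_ne_zero T), hdeg]
  refine Polynomial.irreducible_of_eisenstein_criterion
    (P := Ideal.span {Polynomial.X - Polynomial.C 1}) ?_ ?_ ?_ ?_ ?_
    (isPrimitive_shiftEquiv_Ptree T)
  · exact (Ideal.span_singleton_prime (Polynomial.X_sub_C_ne_zero 1)).mpr
      (Polynomial.prime_X_sub_C 1)
  · rw [hlead, Ideal.mem_span_singleton, Polynomial.dvd_iff_isRoot]
    simp
  · intro n hn
    rw [hdegree, Nat.cast_lt] at hn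
    have := congrArg (Polynomial.coeff · n) (map_eval_one_shiftEquiv_Ptree T)
    rw [Ideal.mem_span_singleton, Polynomial.dvd_iff_isRoot, Polynomial.IsRoot.def]
    simpa [hn.ne] using this
  · simpa [hdegree] using leafCount_pos T
  · rw [Ideal.span_singleton_pow, Ideal.mem_span_singleton, coeff_zero_shiftEquiv_Ptree,
      Polynomial.C_1]
    exact not_sq_dvd_one_sub_pPol T

end RTree

namespace RForest

open RTree

lemma exists_equiv_Ptree_eq_of_Pforest_eq {F G : RForest} (h : Pforest F = Pforest G) :
    ∃ σ : Fin F.length ≃ Fin G.length, ∀ i, Ptree (G.get (σ i)) = Ptree (F.get i) := by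
  have hirr (H : RForest) :
      ∀ p ∈ (↑(H.map Ptree) : Multiset (MvPolynomial (Fin 2) ℤ)), Irreducible p := by
    intro p hp
    obtain ⟨T, -, rfl⟩ := List.mem_map.mp (Multiset.mem_coe.mp hp)
    exact irreducible_Ptree T
  have hrel := UniqueFactorizationMonoid.factors_unique (hirr F) (hirr G)
    (.of_eq (by simpa [Pforest] using h))
  have hperm : (F.map Ptree).Perm (G.map Ptree) := by
    refine Multiset.coe_eq_coe.mp (Multiset.rel_eq.mp (hrel.mono fun p hp q hq hpq => ?_))
    obtain ⟨T, -, rfl⟩ := List.mem_map.mp (Multiset.mem_coe.mp hp)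
    obtain ⟨U, -, rfl⟩ := List.mem_map.mp (Multiset.mem_coe.mp hq)
    exact eq_of_associated_of_constantCoeff_eq_one hpq (constantCoeff_Ptree T)
      (constantCoeff_Ptree U)
  obtain ⟨σ, hσ⟩ := hperm.exists_equiv_get_eq
  refine ⟨(finCongr (List.length_map _).symm).trans (σ.trans (finCongr (List.length_map _))),
    fun i => ?_⟩
  simpa using hσ (Fin.cast (List.length_map _).symm i)

lemma iso_of_Pforest_eq {F G : RForest} (h : Pforest F = Pforest G)
    (hF : ∀ T ∈ F, ∀ U, Ptree T = Ptree U → RTree.Iso T U) : Iso F G := by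
  obtain ⟨σ, hσ⟩ := exists_equiv_Ptree_eq_of_Pforest_eq h
  exact ⟨σ, fun i => hF _ (List.get_mem _ _) _ (hσ i).symm⟩

lemma Pforest_eq_of_iso {F G : RForest} (h : Iso F G)
    (hF : ∀ T ∈ F, ∀ U, RTree.Iso T U → Ptree T = Ptree U) : Pforest F = Pforest G := by
  obtain ⟨σ, hσ⟩ := h
  exact List.prod_map_eq_of_equiv σ fun i => hF _ (List.get_mem _ _) _ (hσ i)

end RForest

namespace RTree

theorem iso_of_Ptree_eq {T U : RTree} (h : Ptree T = Ptree U) : Iso T U := by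
  induction T using RTree.induction generalizing U with
  | node ts ih =>
    obtain ⟨us⟩ := U
    rw [iso_node_iff]
    match ts, us with
    | [], [] => exact ⟨Equiv.refl _, fun i => i.elim0⟩
    | [], u :: us => exact absurd h (Ptree_nil_ne_Ptree_cons u us)
    | t :: ts, [] => exact absurd h.symm (Ptree_nil_ne_Ptree_cons t ts)
    | t :: ts, u :: us =>
      rw [Ptree_cons, Ptree_cons] at h
      exact RForest.iso_of_Pforest_eq (mul_left_cancel₀ (X_ne_zero 0) (add_left_cancel h))
        fun T hT _ => ih T hT

theorem Ptree_eq_of_iso {T U : RTree} (h : Iso T U) : Ptree T = Ptree U := by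
  induction T using RTree.induction generalizing U with
  | node ts ih =>
    obtain ⟨us⟩ := U
    rw [iso_node_iff] at h
    obtain ⟨σ, -⟩ := id h
    match ts, us with
    | [], [] => rfl
    | [], _ :: _ => exact (σ.symm 0).elim0
    | _ :: _, [] => exact (σ 0).elim0
    | t :: ts, u :: us =>
      rw [Ptree_cons, Ptree_cons, RForest.Pforest_eq_of_iso h fun T hT _ => ih T hT]

end RTree

theorem stmt12 (F₁ F₂ : RForest) :
    RForest.Pforest F₁ = RForest.Pforest F₂ ↔ RForest.Iso F₁ F₂ :=
  ⟨fun h => RForest.iso_of_Pforest_eq h fun _ _ _ => RTree.iso_of_Ptree_eq,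
    fun h => RForest.Pforest_eq_of_iso h fun _ _ _ => RTree.Ptree_eq_of_iso⟩
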